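/- arXiv:1706.09649 — 3 statements merged into one kernel-verified Lean document; each statement's English description precedes it below -/
import Mathlib

section
/- For all integers p ≥ 1 and 0 ≤ k ≤ p, the rank-generating function of the poset of regions of 𝒟_p^k with respect to the region of y_p satisfies in ℤ[t]: ζ_p^k(t) = Σ_{x ∈ M_p^k} t^{sep_p^k(y_p, x)} = (∏_{i=1}^{p−1} (1 + t + ⋯ + t^{2i−1})) · (1 + t + ⋯ + t^{p+k−1}). (For k = 0 this is Solomon's factorization for the Coxeter arrangement of type D_p, for k = p it is Solomon's factorization for the Coxeter arrangement of type B_p, and for intermediate k it is the factorization property of the restricted Coxeter arrangements of type D.) -/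
open Polynomial Finset

/-- The set `M_p^k` of representative integer points for the regions of `𝒟_p^k`:
points with entries in `{±1, …, ±p}`, pairwise distinct absolute values, and
`x i ≠ -1` for the first `p - k` coordinates. -/
noncomputable def Mfin (p k : ℕ) : Finset (Fin p → ℤ) :=
  (Fintype.piFinset fun _ : Fin p => Finset.Icc (-(p : ℤ)) (p : ℤ)).filter
    fun x => (∀ i, x i ≠ 0) ∧ (∀ i j, i ≠ j → |x i| ≠ |x j|) ∧
      ∀ i : Fin p, (i : ℕ) < p - k → x i ≠ -1

/-- The number of hyperplanes of `𝒟_p^k` separating `u` and `v`, for `u, v` on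
none of the hyperplanes: hyperplanes `ker (x_i - x_j)` and `ker (x_i + x_j)` for
`i < j`, and `ker x_i` for the last `k` coordinates. -/
noncomputable def sep (p k : ℕ) (u v : Fin p → ℝ) : ℕ :=
  (Finset.univ.filter fun q : Fin p × Fin p =>
      q.1 < q.2 ∧ (u q.1 - u q.2) * (v q.1 - v q.2) < 0).card +
  (Finset.univ.filter fun q : Fin p × Fin p =>
      q.1 < q.2 ∧ (u q.1 + u q.2) * (v q.1 + v q.2) < 0).card +
  (Finset.univ.filter fun i : Fin p => p - k ≤ (i : ℕ) ∧ u i * v i < 0).card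

/-- Coercion of an integer point to a real point. -/
def toR {p : ℕ} (x : Fin p → ℤ) : Fin p → ℝ := fun i => (x i : ℝ)

/-- The base point `y_p = (p, p-1, …, 1)`. -/
noncomputable def ypt (p : ℕ) : Fin p → ℝ := fun i => (p : ℝ) - (i : ℝ)

/-- The rank-generating function of the poset of regions of `𝒟_p^k` with respect
to the region of `y_p`. -/
noncomputable def zeta (p k : ℕ) : Polynomial ℤ :=
  ∑ x ∈ Mfin p k, Polynomial.X ^ sep p k (ypt p) (toR x)

/-- `F e = 1 + t + ⋯ + t^e`. -/
noncomputable def Fpoly (e : ℕ) : Polynomial ℤ :=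
  ∑ j ∈ Finset.range (e + 1), Polynomial.X ^ j

/-- The hyperplanes of the arrangement `𝒟_p^k` in `ℝ^p`. -/
def hyps (p k : ℕ) : Set (Set (Fin p → ℝ)) :=
  {H | (∃ i j : Fin p, i < j ∧ H = {x | x i - x j = 0}) ∨
       (∃ i j : Fin p, i < j ∧ H = {x | x i + x j = 0}) ∨
       (∃ i : Fin p, p - k ≤ (i : ℕ) ∧ H = {x | x i = 0})}

/-- The complement of the union of the hyperplanes of `𝒟_p^k`. -/
def comp (p k : ℕ) : Set (Fin p → ℝ) := (⋃ H ∈ hyps p k, H)ᶜ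

/-- Deletion of the `i`-th coordinate. -/
def deleteCoord {p : ℕ} (i : Fin p) (x : Fin p → ℤ) : Fin (p - 1) → ℤ :=
  fun j =>
    if (j : ℕ) < (i : ℕ) then x ⟨j, by have := j.isLt; omega⟩
    else x ⟨(j : ℕ) + 1, by have := j.isLt; omega⟩

def statZ (p k : ℕ) (x : Fin p → ℤ) : ℕ :=
  (Finset.univ.filter fun q : Fin p × Fin p => q.1 < q.2 ∧ x q.1 < x q.2).card +
  (Finset.univ.filter fun q : Fin p × Fin p => q.1 < q.2 ∧ x q.1 + x q.2 < 0).card +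
  (Finset.univ.filter fun i : Fin p => p - k ≤ (i : ℕ) ∧ x i < 0).card

noncomputable def Zp (p k : ℕ) : Polynomial ℤ := ∑ x ∈ Mfin p k, X ^ statZ p k x

lemma Fpoly_mul (e : ℕ) : Fpoly e * (X - 1 : Polynomial ℤ) = X ^ (e+1) - 1 :=
  geom_sum_mul X (e+1)

lemma X_sub_one_ne : (X - 1 : Polynomial ℤ) ≠ 0 := by
  simpa using X_sub_C_ne_zero (1:ℤ)

lemma Fpoly_doubling (a : ℕ) : (1 + X^(a+1)) * Fpoly a = Fpoly (2*a+1) := by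
  have h : Fpoly (2*a+1) = Fpoly a + X^(a+1) * Fpoly a := by
    unfold Fpoly
    rw [show 2*a+1+1 = (a+1) + (a+1) by ring, Finset.sum_range_add, mul_sum]
    congr 1
    exact Finset.sum_congr rfl fun j hj => pow_add X (a+1) j
  rw [h]; ring

lemma key_identity (m n : ℕ) :
    Fpoly (m+2*n+1) * ((1 + X^(m+2*n+2)) * Fpoly m) +
      X^(m+1) * (Fpoly (m+2*n) * Fpoly (2*n+1)) =
    Fpoly (2*m+2*n+1) * Fpoly (m+2*n+2) := by
  have hc : ((X - 1) * (X - 1) : Polynomial ℤ) ≠ 0 :=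
    mul_ne_zero X_sub_one_ne X_sub_one_ne
  apply mul_right_cancel₀ hc
  have e1 := Fpoly_mul (m+2*n+1)
  have e2 := Fpoly_mul m
  have e3 := Fpoly_mul (m+2*n)
  have e4 := Fpoly_mul (2*n+1)
  have e5 := Fpoly_mul (2*m+2*n+1)
  have e6 := Fpoly_mul (m+2*n+2)
  calc (Fpoly (m+2*n+1) * ((1 + X^(m+2*n+2)) * Fpoly m) +
      X^(m+1) * (Fpoly (m+2*n) * Fpoly (2*n+1))) * ((X-1)*(X-1))
      = (Fpoly (m+2*n+1) * (X-1)) * (1 + X^(m+2*n+2)) * (Fpoly m * (X-1)) +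
        X^(m+1) * ((Fpoly (m+2*n) * (X-1)) * (Fpoly (2*n+1) * (X-1))) := by ring
    _ = (X^(m+2*n+2) - 1) * (1 + X^(m+2*n+2)) * (X^(m+1) - 1) +
        X^(m+1) * ((X^(m+2*n+1) - 1) * (X^(2*n+2) - 1)) := by rw [e1, e2, e3, e4]
    _ = (X^(2*m+2*n+2) - 1) * (X^(m+2*n+3) - 1) := by ring
    _ = (Fpoly (2*m+2*n+1) * (X-1)) * (Fpoly (m+2*n+2) * (X-1)) := by rw [e5, e6]
    _ = Fpoly (2*m+2*n+1) * Fpoly (m+2*n+2) * ((X-1)*(X-1)) := by ring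

lemma count_lt (p c : ℕ) (hc : c ≤ p) :
    (Finset.univ.filter fun i : Fin p => (i : ℕ) < c).card = c := by
  have h : (Finset.univ.filter fun i : Fin p => (i : ℕ) < c) =
      (Finset.range c).attachFin (fun m hm => lt_of_lt_of_le (mem_range.mp hm) hc) := by
    ext i; simp [Finset.mem_attachFin]
  rw [h, Finset.card_attachFin, Finset.card_range]

lemma count_ge (p c : ℕ) (hc : c ≤ p) :
    (Finset.univ.filter fun i : Fin p => c ≤ (i : ℕ)).card = p - c := by
  have h := Finset.card_filter_add_card_filter_not
    (s := (Finset.univ : Finset (Fin p))) (p := fun i : Fin p => (i:ℕ) < c)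
  simp only [not_lt] at h
  have := count_lt p c hc
  simp only [Finset.card_univ, Fintype.card_fin] at h
  omega

lemma succAbove_val {p : ℕ} (t : Fin (p+1)) (j : Fin p) :
    ((t.succAbove j : Fin (p+1)) : ℕ) = if (j:ℕ) < (t:ℕ) then (j:ℕ) else (j:ℕ)+1 := by
  rcases lt_or_ge (j:ℕ) (t:ℕ) with h | h
  · rw [Fin.succAbove_of_castSucc_lt _ _ (by simpa [Fin.lt_def] using h)]
    simp [h]
  · rw [Fin.succAbove_of_le_castSucc _ _ (by simpa [Fin.le_def] using h)]
    simp [Nat.not_lt.mpr h]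

lemma succAbove_lt_iff {p : ℕ} (t : Fin (p+1)) (j : Fin p) :
    t.succAbove j < t ↔ (j:ℕ) < (t:ℕ) := by
  rw [Fin.lt_def, succAbove_val]
  split <;> omega

lemma lt_succAbove_iff {p : ℕ} (t : Fin (p+1)) (j : Fin p) :
    t < t.succAbove j ↔ (t:ℕ) ≤ (j:ℕ) := by
  rw [Fin.lt_def, succAbove_val]
  split <;> omega

lemma succAbove_lt_succAbove {p : ℕ} (t : Fin (p+1)) (i j : Fin p) :
    t.succAbove i < t.succAbove j ↔ i < j := by
  rw [Fin.lt_def, Fin.lt_def, succAbove_val, succAbove_val]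
  split <;> split <;> omega

lemma pair_count_insert {p : ℕ} (t : Fin (p+1)) (y : Fin (p+1) → ℤ)
    (R : ℤ → ℤ → Prop) [DecidableRel R] :
    (Finset.univ.filter fun q : Fin (p+1) × Fin (p+1) => q.1 < q.2 ∧ R (y q.1) (y q.2)).card
    = (Finset.univ.filter fun q : Fin p × Fin p =>
        q.1 < q.2 ∧ R (y (t.succAbove q.1)) (y (t.succAbove q.2))).card
      + ((Finset.univ.filter fun j : Fin p => t < t.succAbove j ∧ R (y t) (y (t.succAbove j))).card
      + (Finset.univ.filter fun i : Fin p => t.succAbove i < t ∧ R (y (t.succAbove i)) (y t)).card) := by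
  simp only [Finset.card_filter]
  rw [Fintype.sum_prod_type, Fin.sum_univ_succAbove _ t]
  rw [Fin.sum_univ_succAbove (fun j => if t < j ∧ R (y t) (y j) then 1 else 0) t]
  simp only [lt_irrefl, false_and, if_false, zero_add]
  rw [Finset.sum_congr rfl (fun i (_ : i ∈ univ) =>
    Fin.sum_univ_succAbove (fun j => if t.succAbove i < j ∧ R (y (t.succAbove i)) (y j) then 1 else 0) t)]
  rw [Finset.sum_add_distrib, Fintype.sum_prod_type]
  simp only [succAbove_lt_succAbove]
  ring

def kk (p k : ℕ) (t : Fin (p+1)) : ℕ := if (t:ℕ) < p+1-k then k else k-1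


lemma zone_iff {p k : ℕ} (hk : k ≤ p+1) (t : Fin (p+1)) (j : Fin p) :
    (p+1-k ≤ ((t.succAbove j : Fin (p+1)) : ℕ)) ↔ (p - kk p k t ≤ (j:ℕ)) := by
  have ht := t.isLt
  have hj := j.isLt
  rw [succAbove_val, kk]
  split_ifs <;> omega

lemma mem_Mfin {p k : ℕ} {x : Fin p → ℤ} : x ∈ Mfin p k ↔
    (∀ i, -(p:ℤ) ≤ x i ∧ x i ≤ p) ∧ (∀ i, x i ≠ 0) ∧
    (∀ i j, i ≠ j → |x i| ≠ |x j|) ∧ ∀ i : Fin p, (i : ℕ) < p - k → x i ≠ -1 := by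
  simp [Mfin, Fintype.mem_piFinset, Finset.mem_Icc]

lemma remove_mem {p k : ℕ} (hk : k ≤ p+1) (t : Fin (p+1)) {x : Fin (p+1) → ℤ}
    (hx : x ∈ Mfin (p+1) k) (hxt : (x t).natAbs = p+1) :
    t.removeNth x ∈ Mfin p (kk p k t) := by
  show (fun j => x (t.succAbove j)) ∈ Mfin p (kk p k t)
  obtain ⟨h1, h2, h3, h4⟩ := mem_Mfin.mp hx
  refine mem_Mfin.mpr ⟨fun j => ?_, fun j => h2 _, fun i j hij =>
    h3 _ _ (fun h => hij (Fin.succAbove_right_injective h)), fun j hj => h4 _ ?_⟩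
  · have hne : t.succAbove j ≠ t := Fin.succAbove_ne t j
    have hd := h3 (t.succAbove j) t hne
    have hb := h1 (t.succAbove j); push_cast at hb
    have ht' : |x t| = (p:ℤ)+1 := by
      rw [Int.abs_eq_natAbs, hxt]; push_cast; ring
    have habs : |x (t.succAbove j)| ≠ (p:ℤ)+1 := by rw [← ht']; exact hd
    rcases abs_cases (x (t.succAbove j)) with ⟨he,_⟩|⟨he,_⟩ <;> rw [he] at habs <;>
      constructor <;> omega
  · have hz := zone_iff hk t j
    omega

lemma insert_mem {p k : ℕ} (hp : 1 ≤ p) (hk : k ≤ p+1) (t : Fin (p+1)) {s : ℤ}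
    (hs : s = 1 ∨ s = -1) {x' : Fin p → ℤ} (hx' : x' ∈ Mfin p (kk p k t)) :
    t.insertNth (s * ((p:ℤ)+1)) x' ∈ Mfin (p+1) k := by
  obtain ⟨h1, h2, h3, h4⟩ := mem_Mfin.mp hx'
  set v : ℤ := s * ((p:ℤ)+1) with hv
  have h0 : |(p:ℤ)+1| = (p:ℤ)+1 := abs_of_nonneg (by positivity)
  have hvabs : |v| = (p:ℤ)+1 := by rw [hv, abs_mul, h0]; rcases hs with h|h <;> simp [h]
  have hcases : ∀ i : Fin (p+1), i = t ∨ ∃ j, t.succAbove j = i := by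
    intro i
    rcases eq_or_ne i t with h|h
    · exact Or.inl h
    · exact Or.inr (Fin.exists_succAbove_eq h)
  have happ : ∀ j : Fin p, (t.insertNth v x' : Fin (p+1) → ℤ) (t.succAbove j) = x' j := by intro j; exact Fin.insertNth_apply_succAbove (α := fun _ => ℤ) t v x' j
  have happt : (t.insertNth v x' : Fin (p+1) → ℤ) t = v := Fin.insertNth_apply_same (α := fun _ => ℤ) t v x'
  refine mem_Mfin.mpr ⟨?_, ?_, ?_, ?_⟩
  · intro i
    rcases hcases i with rfl|⟨j, rfl⟩
    · rw [happt]; push_cast; rcases abs_cases v with ⟨he,_⟩|⟨he,_⟩ <;> rw [he] at hvabs <;> constructor <;> omega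
    · rw [happ]; have := h1 j; push_cast at this ⊢; constructor <;> omega
  · intro i
    rcases hcases i with rfl|⟨j, rfl⟩
    · rw [happt]; intro h; rw [h] at hvabs; simp at hvabs; omega
    · rw [happ]; exact h2 j
  · intro i j hij
    rcases hcases i with rfl|⟨ji, rfl⟩ <;> rcases hcases j with rfl|⟨jj, rfl⟩
    · exact absurd rfl hij
    · rw [happt, happ, hvabs]
      have := h1 jj; have := h2 jj
      rcases abs_cases (x' jj) with ⟨he,_⟩|⟨he,_⟩ <;> rw [he] <;> intro hc <;> omega
    · rw [happt, happ, hvabs]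
      have := h1 ji; have := h2 ji
      rcases abs_cases (x' ji) with ⟨he,_⟩|⟨he,_⟩ <;> rw [he] <;> intro hc <;> omega
    · rw [happ, happ]
      refine h3 ji jj (fun h => hij ?_)
      rw [h]
  · intro i hi
    rcases hcases i with rfl|⟨j, rfl⟩
    · rw [happt]; intro h; rw [h] at hvabs; simp at hvabs; omega
    · rw [happ]
      apply h4
      have hz := zone_iff hk t j
      omega

lemma statZ_split {p k : ℕ} (hk : k ≤ p+1) (t : Fin (p+1)) (v : ℤ) (x' : Fin p → ℤ) :
    statZ (p+1) k (t.insertNth v x') =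
      statZ p (kk p k t) x'
      + (((Finset.univ.filter fun j : Fin p => t < t.succAbove j ∧ v < x' j).card
        + (Finset.univ.filter fun i : Fin p => t.succAbove i < t ∧ x' i < v).card)
      + ((Finset.univ.filter fun j : Fin p => t < t.succAbove j ∧ v + x' j < 0).card
        + (Finset.univ.filter fun i : Fin p => t.succAbove i < t ∧ x' i + v < 0).card)
      + (if p+1-k ≤ (t:ℕ) ∧ v < 0 then 1 else 0)) := by
  have happ : ∀ j : Fin p, (t.insertNth v x' : Fin (p+1) → ℤ) (t.succAbove j) = x' j := by
    intro j; exact Fin.insertNth_apply_succAbove (α := fun _ => ℤ) t v x' j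
  have happt : (t.insertNth v x' : Fin (p+1) → ℤ) t = v := Fin.insertNth_apply_same (α := fun _ => ℤ) t v x'
  unfold statZ
  rw [pair_count_insert t _ (· < ·), pair_count_insert t _ (fun a b => a + b < 0)]
  have hz : (Finset.univ.filter fun i : Fin (p+1) => p+1-k ≤ (i:ℕ) ∧ (t.insertNth v x' : Fin (p+1) → ℤ) i < 0).card
      = (Finset.univ.filter fun i : Fin p => p - kk p k t ≤ (i:ℕ) ∧ x' i < 0).card
        + (if p+1-k ≤ (t:ℕ) ∧ v < 0 then 1 else 0) := by
    rw [Finset.card_filter, Fin.sum_univ_succAbove _ t, Finset.card_filter, happt, add_comm]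
    congr 1
    exact Finset.sum_congr rfl fun j _ => by
      rw [happ j]
      exact if_congr (and_congr_left' (zone_iff hk t j)) rfl rfl
  rw [hz]
  simp only [happ, happt, succAbove_lt_succAbove]
  ring

lemma statZ_insert {p k : ℕ} (hk : k ≤ p+1) (t : Fin (p+1)) {s : ℤ}
    (hs : s = 1 ∨ s = -1) {x' : Fin p → ℤ} (hx' : x' ∈ Mfin p (kk p k t)) :
    statZ (p+1) k (t.insertNth (s * ((p:ℤ)+1)) x') =
      statZ p (kk p k t) x' +
        (if s = 1 then (t:ℕ) else 2*p - (t:ℕ) + (if p+1-k ≤ (t:ℕ) then 1 else 0)) := by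
  obtain ⟨h1, h2, h3, h4⟩ := mem_Mfin.mp hx'
  have ht : (t:ℕ) ≤ p := by have := t.isLt; omega
  rw [statZ_split hk t _ x']
  congr 1
  rcases hs with rfl | rfl
  · rw [if_pos rfl]
    have e1 : (Finset.univ.filter fun j : Fin p => t < t.succAbove j ∧ (1:ℤ) * ((p:ℤ)+1) < x' j).card = 0 := by
      rw [Finset.card_eq_zero, Finset.filter_eq_empty_iff]
      rintro j - ⟨-, hlt⟩
      have := h1 j; omega
    have e2 : (Finset.univ.filter fun i : Fin p => t.succAbove i < t ∧ x' i < (1:ℤ) * ((p:ℤ)+1)).card = (t:ℕ) := by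
      rw [show (Finset.univ.filter fun i : Fin p => t.succAbove i < t ∧ x' i < (1:ℤ) * ((p:ℤ)+1))
          = Finset.univ.filter fun i : Fin p => (i:ℕ) < (t:ℕ) from
        Finset.filter_congr fun i _ => by
          rw [succAbove_lt_iff]
          exact ⟨fun h => h.1, fun h => ⟨h, by have := h1 i; omega⟩⟩]
      exact count_lt p t ht
    have e3 : (Finset.univ.filter fun j : Fin p => t < t.succAbove j ∧ (1:ℤ) * ((p:ℤ)+1) + x' j < 0).card = 0 := by
      rw [Finset.card_eq_zero, Finset.filter_eq_empty_iff]
      rintro j - ⟨-, hlt⟩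
      have := h1 j; omega
    have e4 : (Finset.univ.filter fun i : Fin p => t.succAbove i < t ∧ x' i + (1:ℤ) * ((p:ℤ)+1) < 0).card = 0 := by
      rw [Finset.card_eq_zero, Finset.filter_eq_empty_iff]
      rintro i - ⟨-, hlt⟩
      have := h1 i; omega
    rw [e1, e2, e3, e4, if_neg (fun hcon => by have := hcon.2; omega)]
    omega
  · rw [if_neg (show ¬((-1:ℤ) = 1) by norm_num)]
    have e1 : (Finset.univ.filter fun j : Fin p => t < t.succAbove j ∧ (-1:ℤ) * ((p:ℤ)+1) < x' j).card = p - (t:ℕ) := by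
      rw [show (Finset.univ.filter fun j : Fin p => t < t.succAbove j ∧ (-1:ℤ) * ((p:ℤ)+1) < x' j)
          = Finset.univ.filter fun j : Fin p => (t:ℕ) ≤ (j:ℕ) from
        Finset.filter_congr fun j _ => by
          rw [lt_succAbove_iff]
          exact ⟨fun h => h.1, fun h => ⟨h, by have := h1 j; omega⟩⟩]
      exact count_ge p t ht
    have e2 : (Finset.univ.filter fun i : Fin p => t.succAbove i < t ∧ x' i < (-1:ℤ) * ((p:ℤ)+1)).card = 0 := by
      rw [Finset.card_eq_zero, Finset.filter_eq_empty_iff]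
      rintro i - ⟨-, hlt⟩
      have := h1 i; omega
    have e3 : (Finset.univ.filter fun j : Fin p => t < t.succAbove j ∧ (-1:ℤ) * ((p:ℤ)+1) + x' j < 0).card = p - (t:ℕ) := by
      rw [show (Finset.univ.filter fun j : Fin p => t < t.succAbove j ∧ (-1:ℤ) * ((p:ℤ)+1) + x' j < 0)
          = Finset.univ.filter fun j : Fin p => (t:ℕ) ≤ (j:ℕ) from
        Finset.filter_congr fun j _ => by
          rw [lt_succAbove_iff]
          exact ⟨fun h => h.1, fun h => ⟨h, by have := h1 j; omega⟩⟩]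
      exact count_ge p t ht
    have e4 : (Finset.univ.filter fun i : Fin p => t.succAbove i < t ∧ x' i + (-1:ℤ) * ((p:ℤ)+1) < 0).card = (t:ℕ) := by
      rw [show (Finset.univ.filter fun i : Fin p => t.succAbove i < t ∧ x' i + (-1:ℤ) * ((p:ℤ)+1) < 0)
          = Finset.univ.filter fun i : Fin p => (i:ℕ) < (t:ℕ) from
        Finset.filter_congr fun i _ => by
          rw [succAbove_lt_iff]
          exact ⟨fun h => h.1, fun h => ⟨h, by have := h1 i; omega⟩⟩]
      exact count_lt p t ht
    rw [e1, e2, e3, e4]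
    split_ifs <;> omega

lemma exists_unique_max {p k : ℕ} {x : Fin (p+1) → ℤ} (hx : x ∈ Mfin (p+1) k) :
    ∃! t : Fin (p+1), (x t).natAbs = p+1 := by
  obtain ⟨h1, h2, h3, h4⟩ := mem_Mfin.mp hx
  have hb : ∀ i, 1 ≤ (x i).natAbs ∧ (x i).natAbs ≤ p+1 := fun i => by
    have := h1 i; have := h2 i; push_cast at *; omega
  have hinj : ∀ i j : Fin (p+1), (x i).natAbs = (x j).natAbs → i = j := by
    intro i j h
    by_contra hne
    exact h3 i j hne (by rw [Int.abs_eq_natAbs, Int.abs_eq_natAbs, h])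
  have hex : ∃ t, (x t).natAbs = p+1 := by
    by_contra hcon
    push_neg at hcon
    have hginj : Function.Injective
        (fun i : Fin (p+1) => (⟨(x i).natAbs - 1, by have := hb i; have := hcon i; omega⟩ : Fin p)) := by
      intro i j h
      simp only [Fin.mk.injEq] at h
      exact hinj i j (by have := hb i; have := hb j; omega)
    have := Fintype.card_le_of_injective _ hginj
    simp at this
  obtain ⟨t, ht⟩ := hex
  exact ⟨t, ht, fun t' ht' => hinj t' t (by rw [ht, ht'])⟩

lemma fiber_sum {p k : ℕ} (hp : 1 ≤ p) (hk : k ≤ p+1) (t : Fin (p+1)) {s : ℤ}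
    (hs : s = 1 ∨ s = -1) :
    ∑ x ∈ (Mfin (p+1) k).filter (fun x => x t = s * ((p:ℤ)+1)),
        (X : Polynomial ℤ) ^ statZ (p+1) k x
    = X ^ (if s = 1 then (t:ℕ) else 2*p - (t:ℕ) + (if p+1-k ≤ (t:ℕ) then 1 else 0)) *
      ∑ x' ∈ Mfin p (kk p k t), X ^ statZ p (kk p k t) x' := by
  rw [Finset.mul_sum]
  refine Finset.sum_nbij' (fun x => t.removeNth x) (fun x' => t.insertNth (s * ((p:ℤ)+1)) x')
    ?_ ?_ ?_ ?_ ?_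
  · intro x hxf
    obtain ⟨hx, hxt⟩ := Finset.mem_filter.mp hxf
    have hnat : (x t).natAbs = p+1 := by
      rcases hs with rfl | rfl <;> rw [hxt] <;> push_cast <;> omega
    exact remove_mem hk t hx hnat
  · intro x' hx'
    refine Finset.mem_filter.mpr ⟨insert_mem hp hk t hs hx', ?_⟩
    exact Fin.insertNth_apply_same (α := fun _ => ℤ) t _ x'
  · intro x hxf
    obtain ⟨hx, hxt⟩ := Finset.mem_filter.mp hxf
    rw [show s * ((p:ℤ)+1) = x t from hxt.symm]
    exact Fin.insertNth_self_removeNth t x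
  · intro x' hx'
    exact Fin.removeNth_insertNth (α := fun _ => ℤ) t _ x'
  · intro x hxf
    obtain ⟨hx, hxt⟩ := Finset.mem_filter.mp hxf
    have hnat : (x t).natAbs = p+1 := by
      rcases hs with rfl | rfl <;> rw [hxt] <;> push_cast <;> omega
    have hmem := remove_mem hk t hx hnat
    have hins : x = t.insertNth (s * ((p:ℤ)+1)) (t.removeNth x) := by
      rw [show s * ((p:ℤ)+1) = x t from hxt.symm]
      exact (Fin.insertNth_self_removeNth t x).symm
    conv_lhs => rw [hins]
    rw [statZ_insert hk t hs hmem, pow_add, mul_comm]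

lemma Zp_rec {p k : ℕ} (hp : 1 ≤ p) (hk : k ≤ p+1) :
    Zp (p+1) k =
      (∑ t ∈ Finset.range (p+1-k), ((X:Polynomial ℤ)^t + X^(2*p - t))) * Zp p k
      + (∑ t ∈ Finset.Ico (p+1-k) (p+1), ((X:Polynomial ℤ)^t + X^(2*p+1 - t))) * Zp p (k-1) := by
  have step1 : ∀ x ∈ Mfin (p+1) k, (X:Polynomial ℤ) ^ statZ (p+1) k x =
      ∑ t : Fin (p+1), ((if x t = ((p:ℤ)+1) then (X:Polynomial ℤ) ^ statZ (p+1) k x else 0) +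
        (if x t = -((p:ℤ)+1) then (X:Polynomial ℤ) ^ statZ (p+1) k x else 0)) := by
    intro x hx
    obtain ⟨t0, ht0, huniq⟩ := exists_unique_max hx
    have key : ∀ t : Fin (p+1),
        ((if x t = ((p:ℤ)+1) then (X:Polynomial ℤ) ^ statZ (p+1) k x else 0) +
          (if x t = -((p:ℤ)+1) then (X:Polynomial ℤ) ^ statZ (p+1) k x else 0))
        = if t = t0 then (X:Polynomial ℤ) ^ statZ (p+1) k x else 0 := by
      intro t
      rcases eq_or_ne t t0 with rfl | hne
      · rw [if_pos rfl]
        have hor : x t = (p:ℤ)+1 ∨ x t = -((p:ℤ)+1) := by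
          rcases Int.natAbs_eq (x t) with h | h <;> [left; right] <;>
            rw [h, ht0] <;> push_cast <;> ring
        rcases hor with h | h
        · rw [if_pos h, if_neg (fun hc => by rw [h] at hc; omega), add_zero]
        · rw [if_neg (fun hc => by rw [h] at hc; omega), if_pos h, zero_add]
      · have hna : (x t).natAbs ≠ p+1 := fun hc => hne (huniq t hc)
        rw [if_neg (fun hc => hna (by omega)), if_neg (fun hc => hna (by omega)),
          if_neg hne, add_zero]
    rw [Finset.sum_congr rfl (fun t _ => key t), Finset.sum_ite_eq' Finset.univ t0,
      if_pos (Finset.mem_univ t0)]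
  have step2 : Zp (p+1) k = ∑ t : Fin (p+1),
      ((X : Polynomial ℤ) ^ (t:ℕ) * Zp p (kk p k t) +
        X ^ (2*p - (t:ℕ) + (if p+1-k ≤ (t:ℕ) then 1 else 0)) * Zp p (kk p k t)) := by
    rw [Zp, Finset.sum_congr rfl step1, Finset.sum_comm]
    refine Finset.sum_congr rfl fun t _ => ?_
    rw [Finset.sum_add_distrib, ← Finset.sum_filter, ← Finset.sum_filter]
    have hpos := fiber_sum (k := k) hp hk t (Or.inl rfl)
    have hneg := fiber_sum (k := k) hp hk t (Or.inr rfl)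
    rw [if_pos rfl] at hpos
    rw [if_neg (by norm_num : ¬(-1:ℤ) = 1)] at hneg
    simp only [one_mul] at hpos
    simp only [neg_one_mul] at hneg
    rw [hpos, hneg]
    simp only [Zp]
  simp only [kk] at step2
  rw [step2]
  rw [Fin.sum_univ_eq_sum_range (fun c =>
      ((X : Polynomial ℤ) ^ c * Zp p (if c < p+1-k then k else k-1) +
        X ^ (2*p - c + (if p+1-k ≤ c then 1 else 0)) * Zp p (if c < p+1-k then k else k-1)))]
  rw [Finset.range_eq_Ico, ← Finset.sum_Ico_consecutive _ (Nat.zero_le (p+1-k)) (by omega),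
    ← Finset.range_eq_Ico]
  congr 1
  · rw [Finset.sum_mul]
    refine Finset.sum_congr rfl fun c hc => ?_
    rw [Finset.mem_range] at hc
    rw [if_pos hc, if_neg (show ¬(p+1-k ≤ c) by omega), add_zero, add_mul]
  · rw [Finset.sum_mul]
    refine Finset.sum_congr rfl fun c hc => ?_
    rw [Finset.mem_Ico] at hc
    obtain ⟨hc1, hc2⟩ := hc
    rw [if_neg (show ¬(c < p+1-k) by omega), if_pos (show p+1-k ≤ c by omega),
      show 2*p - c + 1 = 2*p+1 - c by omega, add_mul]

lemma sum_pair (n a : ℕ) (h : n ≤ a) :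
    ∑ t ∈ Finset.range (n+1), ((X:Polynomial ℤ)^t + X^(a - t)) = (1 + X^(a-n)) * Fpoly n := by
  rw [Finset.sum_add_distrib]
  have h2 : ∑ t ∈ Finset.range (n+1), (X:Polynomial ℤ)^(a - t) = X^(a-n) * Fpoly n := by
    rw [← Finset.sum_range_reflect, Fpoly, Finset.mul_sum]
    refine Finset.sum_congr rfl fun j hj => ?_
    rw [Finset.mem_range] at hj
    rw [← pow_add]
    congr 1
    omega
  rw [h2, Fpoly, add_mul, one_mul]

lemma B_eq (p k : ℕ) (hk1 : 1 ≤ k) (hk : k ≤ p+1) :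
    ∑ t ∈ Finset.Ico (p+1-k) (p+1), ((X:Polynomial ℤ)^t + X^(2*p+1 - t))
      = X^(p+1-k) * Fpoly (2*k-1) := by
  rw [show Finset.Ico (p+1-k) (p+1) = Finset.Ico (p+1-k) ((p+1-k)+k) from by congr 1; omega,
    Finset.sum_Ico_eq_sum_range, show p+1-k+k - (p+1-k) = k from by omega]
  have hcong : ∀ s ∈ Finset.range k,
      (X:Polynomial ℤ)^((p+1-k)+s) + X^(2*p+1 - ((p+1-k)+s))
        = X^(p+1-k) * (X^s + X^(2*k-1 - s)) := by
    intro s hs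
    rw [Finset.mem_range] at hs
    rw [mul_add, ← pow_add, ← pow_add]
    congr 2 <;> omega
  rw [Finset.sum_congr rfl hcong, ← Finset.mul_sum]
  congr 1
  have hsp := sum_pair (k-1) (2*k-1) (by omega)
  rw [show k-1+1 = k from by omega, show 2*k-1-(k-1) = k from by omega] at hsp
  rw [hsp, show 2*k-1 = 2*(k-1)+1 from by omega, ← Fpoly_doubling (k-1),
    show k-1+1 = k from by omega]

lemma Zp_top (p k : ℕ) (hk : p ≤ k) : Zp p k = Zp p p := by
  unfold Zp Mfin statZ
  rw [Nat.sub_eq_zero_of_le hk, Nat.sub_self]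

lemma Mfin_zero : Mfin 0 0 = {fun i : Fin 0 => i.elim0} := by
  ext f
  simp only [Mfin, Finset.mem_filter, Fintype.mem_piFinset, Finset.mem_singleton]
  constructor
  · rintro - 
    funext i
    exact i.elim0
  · intro h
    refine ⟨fun i => i.elim0, fun i => i.elim0, fun i => i.elim0, fun i => i.elim0⟩

lemma Zp_zero : Zp 0 0 = 1 := by
  rw [Zp, Mfin_zero, Finset.sum_singleton]
  have : statZ 0 0 (fun i : Fin 0 => i.elim0) = 0 := by
    simp [statZ]
  rw [this, pow_zero]

lemma Mfin_one_zero : Mfin 1 0 = {fun _ : Fin 1 => (1:ℤ)} := by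
  ext f
  simp only [Mfin, Finset.mem_filter, Fintype.mem_piFinset, Finset.mem_Icc, Finset.mem_singleton]
  constructor
  · rintro ⟨hb, h0, -, hm⟩
    have hb0 := hb 0
    have h00 := h0 0
    have hm0 := hm 0 (by norm_num)
    funext i
    have : i = 0 := Subsingleton.elim i 0
    subst this
    push_cast at hb0
    omega
  · intro h
    subst h
    refine ⟨fun i => by norm_num, fun i => by norm_num, fun i j hij => absurd (Subsingleton.elim i j) hij, fun i _ => by norm_num⟩

lemma Mfin_one_one : Mfin 1 1 = {fun _ : Fin 1 => (1:ℤ), fun _ : Fin 1 => (-1:ℤ)} := by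
  ext f
  simp only [Mfin, Finset.mem_filter, Fintype.mem_piFinset, Finset.mem_Icc,
    Finset.mem_insert, Finset.mem_singleton]
  constructor
  · rintro ⟨hb, h0, -, -⟩
    have hb0 := hb 0
    have h00 := h0 0
    push_cast at hb0
    have : f 0 = 1 ∨ f 0 = -1 := by omega
    rcases this with h | h
    · left; funext i; rw [Subsingleton.elim i 0]; exact h
    · right; funext i; rw [Subsingleton.elim i 0]; exact h
  · rintro (h | h) <;> subst h <;>
      exact ⟨fun i => by norm_num, fun i => by norm_num,
        fun i j hij => absurd (Subsingleton.elim i j) hij, fun i hi => by simp at hi⟩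

lemma statZ_one_pos (k : ℕ) : statZ 1 k (fun _ : Fin 1 => (1:ℤ)) = 0 := by
  unfold statZ
  have e1 : (Finset.univ.filter fun q : Fin 1 × Fin 1 =>
      q.1 < q.2 ∧ (fun _ : Fin 1 => (1:ℤ)) q.1 < (fun _ : Fin 1 => (1:ℤ)) q.2).card = 0 := by
    rw [Finset.card_eq_zero, Finset.filter_eq_empty_iff]
    rintro q - ⟨hc, -⟩; exact absurd (Subsingleton.elim q.1 q.2) (ne_of_lt hc)
  have e2 : (Finset.univ.filter fun q : Fin 1 × Fin 1 =>
      q.1 < q.2 ∧ (fun _ : Fin 1 => (1:ℤ)) q.1 + (fun _ : Fin 1 => (1:ℤ)) q.2 < 0).card = 0 := by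
    rw [Finset.card_eq_zero, Finset.filter_eq_empty_iff]
    rintro q - ⟨hc, -⟩; exact absurd (Subsingleton.elim q.1 q.2) (ne_of_lt hc)
  have e3 : (Finset.univ.filter fun i : Fin 1 =>
      1 - k ≤ (i:ℕ) ∧ (fun _ : Fin 1 => (1:ℤ)) i < 0).card = 0 := by
    rw [Finset.card_eq_zero, Finset.filter_eq_empty_iff]
    rintro i - ⟨-, hc⟩; exact absurd hc (by norm_num)
  rw [e1, e2, e3]

lemma statZ_one_neg : statZ 1 1 (fun _ : Fin 1 => (-1:ℤ)) = 1 := by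
  unfold statZ
  have e1 : (Finset.univ.filter fun q : Fin 1 × Fin 1 =>
      q.1 < q.2 ∧ (fun _ : Fin 1 => (-1:ℤ)) q.1 < (fun _ : Fin 1 => (-1:ℤ)) q.2).card = 0 := by
    rw [Finset.card_eq_zero, Finset.filter_eq_empty_iff]
    rintro q - ⟨hc, -⟩; exact absurd (Subsingleton.elim q.1 q.2) (ne_of_lt hc)
  have e2 : (Finset.univ.filter fun q : Fin 1 × Fin 1 =>
      q.1 < q.2 ∧ (fun _ : Fin 1 => (-1:ℤ)) q.1 + (fun _ : Fin 1 => (-1:ℤ)) q.2 < 0).card = 0 := by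
    rw [Finset.card_eq_zero, Finset.filter_eq_empty_iff]
    rintro q - ⟨hc, -⟩; exact absurd (Subsingleton.elim q.1 q.2) (ne_of_lt hc)
  have e3 : (Finset.univ.filter fun i : Fin 1 =>
      1 - 1 ≤ (i:ℕ) ∧ (fun _ : Fin 1 => (-1:ℤ)) i < 0).card = 1 := by
    rw [show (Finset.univ.filter fun i : Fin 1 =>
        1 - 1 ≤ (i:ℕ) ∧ (fun _ : Fin 1 => (-1:ℤ)) i < 0) = {0} from by
      ext i; simp [Subsingleton.elim i 0]]
    rfl
  rw [e1, e2, e3]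

lemma Zp_one_zero : Zp 1 0 = 1 := by
  rw [Zp, Mfin_one_zero, Finset.sum_singleton, statZ_one_pos, pow_zero]

lemma Zp_one_one : Zp 1 1 = 1 + X := by
  rw [Zp, Mfin_one_one, Finset.sum_insert (by
    intro hc
    rw [Finset.mem_singleton] at hc
    have := congrFun hc 0
    norm_num at this), Finset.sum_singleton, statZ_one_pos, statZ_one_neg, pow_zero, pow_one]

lemma Zp_formula : ∀ p k : ℕ, k ≤ p →
    Zp p k = (∏ i ∈ Finset.Icc 1 (p-1), Fpoly (2*i-1)) * Fpoly (p+k-1) := by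
  intro p
  induction p with
  | zero =>
    intro k hk
    interval_cases k
    rw [Zp_zero]
    simp [Fpoly]
  | succ p ih =>
    intro k hk
    rcases Nat.eq_zero_or_pos p with rfl | hp
    · interval_cases k
      · rw [Zp_one_zero]
        simp [Fpoly]
      · rw [Zp_one_one]
        simp [Fpoly, Finset.sum_range_succ]
    · -- p ≥ 1
      have hprod : ∏ i ∈ Finset.Icc 1 (p+1-1), Fpoly (2*i-1)
          = (∏ i ∈ Finset.Icc 1 (p-1), Fpoly (2*i-1)) * Fpoly (2*p-1) := by
        obtain ⟨q, rfl⟩ : ∃ q, p = q+1 := ⟨p-1, by omega⟩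
        rw [show q+1+1-1 = q+1 from rfl, Finset.prod_Icc_succ_top (by omega),
          show q+1-1 = q from rfl, show 2*(q+1)-1 = 2*(q+1)-1 from rfl]
      rw [Zp_rec hp hk, hprod, show p+1+k-1 = p+k from by omega]
      rcases Nat.lt_or_ge k (p+1) with hklt | hkge
      · -- k ≤ p
        have hkp : k ≤ p := by omega
        have hA : ∑ t ∈ Finset.range (p+1-k), ((X:Polynomial ℤ)^t + X^(2*p - t))
            = (1 + X^(p+k)) * Fpoly (p-k) := by
          have := sum_pair (p-k) (2*p) (by omega)
          rw [show p-k+1 = p+1-k from by omega, show 2*p - (p-k) = p+k from by omega] at this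
          exact this
        rw [hA, ih k hkp]
        rcases Nat.eq_zero_or_pos k with rfl | hk1
        · -- k = 0
          rw [show Finset.Ico (p+1-0) (p+1) = ∅ from by simp, Finset.sum_empty, zero_mul, add_zero]
          have hd := Fpoly_doubling (p-1)
          rw [show p-1+1 = p from by omega, show 2*(p-1)+1 = 2*p-1 from by omega] at hd
          simp only [Nat.add_zero, Nat.sub_zero]
          linear_combination (Fpoly p * (∏ i ∈ Finset.Icc 1 (p-1), Fpoly (2*i-1))) * hd
        · -- 1 ≤ k ≤ p
          rw [B_eq p k hk1 (by omega), ih (k-1) (by omega),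
            show p+(k-1)-1 = p+k-2 from by omega]
          have hkey := key_identity (p-k) (k-1)
          rw [show p-k+2*(k-1)+1 = p+k-1 from by omega,
            show p-k+2*(k-1)+2 = p+k from by omega,
            show p-k+2*(k-1) = p+k-2 from by omega,
            show p-k+1 = p+1-k from by omega,
            show 2*(k-1)+1 = 2*k-1 from by omega,
            show 2*(p-k)+2*(k-1)+1 = 2*p-1 from by omega] at hkey
          linear_combination (∏ i ∈ Finset.Icc 1 (p-1), Fpoly (2*i-1)) * hkey
      · -- k = p+1
        have hk1 : k = p+1 := by omega
        subst hk1
        have hB := B_eq p (p+1) (by omega) le_rfl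
        rw [show p+1-(p+1) = 0 from by omega] at hB ⊢
        rw [Finset.range_zero, Finset.sum_empty, zero_mul, zero_add, hB, pow_zero, one_mul,
          show 2*(p+1)-1 = 2*p+1 from by omega, Nat.add_sub_cancel, ih p le_rfl,
          show p+p-1 = 2*p-1 from by omega, show p+(p+1) = 2*p+1 from by omega]
        ring

lemma sep_eq_statZ (p k : ℕ) (x : Fin p → ℤ) :
    sep p k (ypt p) (toR x) = statZ p k x := by
  unfold sep statZ ypt toR
  congr 1
  · congr 1
    · apply congrArg
      apply Finset.filter_congr
      intro q _
      apply and_congr_right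
      intro hlt
      have h1 : ((q.1 : ℕ) : ℝ) < ((q.2 : ℕ) : ℝ) := by exact_mod_cast (Fin.lt_def.mp hlt)
      have hq1 : ((q.1 : ℕ) : ℝ) < p := by exact_mod_cast q.1.isLt
      have hq2 : ((q.2 : ℕ) : ℝ) < p := by exact_mod_cast q.2.isLt
      constructor
      · intro h
        by_contra hc
        push_neg at hc
        have hc' : ((x q.2 : ℝ)) ≤ (x q.1 : ℝ) := by exact_mod_cast hc
        nlinarith
      · intro h
        have h' : ((x q.1 : ℝ)) < (x q.2 : ℝ) := by exact_mod_cast h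
        nlinarith
    · apply congrArg
      apply Finset.filter_congr
      intro q _
      apply and_congr_right
      intro hlt
      have hq1 : ((q.1 : ℕ) : ℝ) < p := by exact_mod_cast q.1.isLt
      have hq2 : ((q.2 : ℕ) : ℝ) < p := by exact_mod_cast q.2.isLt
      constructor
      · intro h
        by_contra hc
        push_neg at hc
        have hc' : (0:ℝ) ≤ (x q.1 : ℝ) + (x q.2 : ℝ) := by exact_mod_cast hc
        nlinarith
      · intro h
        have h' : ((x q.1 : ℝ)) + (x q.2 : ℝ) < 0 := by exact_mod_cast h
        nlinarith
  · apply congrArg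
    apply Finset.filter_congr
    intro i _
    apply and_congr_right
    intro hle
    have hi : ((i : ℕ) : ℝ) < p := by exact_mod_cast i.isLt
    constructor
    · intro h
      by_contra hc
      push_neg at hc
      have hc' : (0:ℝ) ≤ (x i : ℝ) := by exact_mod_cast hc
      nlinarith
    · intro h
      have h' : ((x i : ℝ)) < 0 := by exact_mod_cast h
      nlinarith

/-- For all `p ≥ 1` and `0 ≤ k ≤ p`, the rank-generating function of the
poset of regions of `𝒟_p^k` with base region the region of `y_p` factors according to the
exponents `1, 3, …, 2p-3, p+k-1`. -/
theorem zeta_factors_of_Dpk_all (p k : ℕ) (hp : 1 ≤ p) (hk : k ≤ p) :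
    zeta p k = (∏ i ∈ Finset.Icc 1 (p - 1), Fpoly (2 * i - 1)) * Fpoly (p + k - 1) := by
  have h1 : zeta p k = Zp p k :=
    Finset.sum_congr rfl fun x _ => by rw [sep_eq_statZ]
  rw [h1, Zp_formula p k hk]
end

section
/- Let p ≥ 3 and 0 ≤ k ≤ p be integers and define Δ_p^k := Σ_{i=1}^{p−k} (t^{i−1} + t^{2p−i−1}) · F(p+k−2) + Σ_{i=p−k+1}^{p} (t^{i−1} + t^{2p−i}) · F(p+k−3) ∈ ℤ[t]. Then Δ_p^k = F(p+k−1) · F(2p−3). -/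
open Polynomial Finset

section aux
open Polynomial Finset

lemma Fpoly_mul_X_sub_one (e : ℕ) :
    Fpoly e * (X - 1 : Polynomial ℤ) = X ^ (e + 1) - 1 := by
  simpa [Fpoly] using geom_sum_mul (X : Polynomial ℤ) (e + 1)

end aux

/-- the identity `Δ_p^k = F(p+k-1) ⋅ F(2p-3)` for `p ≥ 3`, `0 ≤ k ≤ p`. -/
theorem delta_eq (p k : ℕ) (hp : 3 ≤ p) (hk : k ≤ p) :
    (∑ i ∈ Finset.Icc 1 (p - k),
        ((Polynomial.X : Polynomial ℤ) ^ (i - 1) + Polynomial.X ^ (2 * p - i - 1)) *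
          Fpoly (p + k - 2)) +
      (∑ i ∈ Finset.Icc (p - k + 1) p,
        ((Polynomial.X : Polynomial ℤ) ^ (i - 1) + Polynomial.X ^ (2 * p - i)) *
          Fpoly (p + k - 3))
    = Fpoly (p + k - 1) * Fpoly (2 * p - 3) := by
  set m := p - k with hm
  have hmk : m + k = p := by omega
  rw [← Finset.sum_mul, ← Finset.sum_mul]
  have h1 : (∑ i ∈ Finset.Icc 1 m, ((X : Polynomial ℤ) ^ (i - 1) + X ^ (2 * p - i - 1)))
      = (1 + X ^ (p + k - 1)) * ∑ j ∈ Finset.range m, X ^ j := by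
    rw [← Finset.Ico_add_one_right_eq_Icc, Finset.sum_Ico_eq_sum_range,
      show m + 1 - 1 = m from rfl, Finset.sum_add_distrib, add_mul, one_mul, Finset.mul_sum]
    congr 1
    · refine Finset.sum_congr rfl fun j hj => ?_
      congr 1; omega
    · rw [← Finset.sum_range_reflect (fun j => (X : Polynomial ℤ) ^ (p + k - 1) * X ^ j) m]
      refine Finset.sum_congr rfl fun j hj => ?_
      simp only [Finset.mem_range] at hj
      rw [← pow_add]
      congr 1; omega
  have h2 : (∑ i ∈ Finset.Icc (m + 1) p, ((X : Polynomial ℤ) ^ (i - 1) + X ^ (2 * p - i)))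
      = (X ^ m + X ^ p) * ∑ j ∈ Finset.range k, X ^ j := by
    rw [← Finset.Ico_add_one_right_eq_Icc, Finset.sum_Ico_eq_sum_range,
      show p + 1 - (m + 1) = k from by omega, Finset.sum_add_distrib, add_mul,
      Finset.mul_sum, Finset.mul_sum]
    congr 1
    · refine Finset.sum_congr rfl fun j hj => ?_
      simp only [Finset.mem_range] at hj
      rw [← pow_add]
      congr 1; omega
    · rw [← Finset.sum_range_reflect (fun j => (X : Polynomial ℤ) ^ p * X ^ j) k]
      refine Finset.sum_congr rfl fun j hj => ?_
      simp only [Finset.mem_range] at hj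
      rw [← pow_add]
      congr 1; omega
  rw [h1, h2]
  have hne : (X - 1 : Polynomial ℤ) ≠ 0 := by
    simpa using Polynomial.X_sub_C_ne_zero (1 : ℤ)
  refine mul_right_cancel₀ (mul_ne_zero hne hne) ?_
  obtain ⟨d, hd⟩ : ∃ d, p + k = d + 2 := ⟨p + k - 2, by omega⟩
  have e1 : p + k - 2 + 1 = d + 1 := by omega
  have e2 : p + k - 3 + 1 = d := by omega
  have e3 : p + k - 1 + 1 = d + 2 := by omega
  have e4 : 2 * p - 3 + 1 = m + d := by omega
  have e5 : p + k - 1 = d + 1 := by omega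
  have e6 : p = m + k := by omega
  calc ((1 + X ^ (p + k - 1)) * (∑ j ∈ Finset.range m, (X : Polynomial ℤ) ^ j) *
          Fpoly (p + k - 2) +
        (X ^ m + X ^ p) * (∑ j ∈ Finset.range k, (X : Polynomial ℤ) ^ j) *
          Fpoly (p + k - 3)) * ((X - 1) * (X - 1))
      = (1 + X ^ (p + k - 1)) * ((∑ j ∈ Finset.range m, (X : Polynomial ℤ) ^ j) * (X - 1)) *
          (Fpoly (p + k - 2) * (X - 1)) +
        (X ^ m + X ^ p) * ((∑ j ∈ Finset.range k, (X : Polynomial ℤ) ^ j) * (X - 1)) *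
          (Fpoly (p + k - 3) * (X - 1)) := by ring
    _ = (1 + X ^ (d + 1)) * (X ^ m - 1) * (X ^ (d + 1) - 1) +
        (X ^ m + X ^ (m + k)) * (X ^ k - 1) * (X ^ d - 1) := by
        rw [geom_sum_mul, geom_sum_mul, Fpoly_mul_X_sub_one, Fpoly_mul_X_sub_one,
          e1, e2, e5, e6]
    _ = (X ^ (d + 2) - 1) * (X ^ (m + d) - 1) := by
        have hX : (X : Polynomial ℤ) ^ (d + 2) = X ^ (m + 2 * k) := by
          rw [show d + 2 = m + 2 * k from by omega]
        linear_combination (1 - (X : Polynomial ℤ) ^ d) * hX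
    _ = Fpoly (p + k - 1) * Fpoly (2 * p - 3) * ((X - 1) * (X - 1)) := by
        rw [show Fpoly (p + k - 1) * Fpoly (2 * p - 3) * ((X - 1) * (X - 1)) =
            (Fpoly (p + k - 1) * (X - 1)) * (Fpoly (2 * p - 3) * (X - 1)) from by ring,
          Fpoly_mul_X_sub_one, Fpoly_mul_X_sub_one, e3, e4]
end

section
/- Let p ≥ 1 and 0 ≤ k ≤ p be integers. Then every point of M_p^k lies in the complement ℝ^p \ ⋃_{H ∈ 𝒟_p^k} H, and every connected component of this complement (i.e., every region of 𝒟_p^k) contains exactly one point of M_p^k. -/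
open Polynomial Finset

/- ------------------ auxiliary development ------------------ -/

lemma mem_comp_iff {p k : ℕ} {u : Fin p → ℝ} :
    u ∈ comp p k ↔ (∀ i j : Fin p, i < j → u i - u j ≠ 0) ∧
      (∀ i j : Fin p, i < j → u i + u j ≠ 0) ∧
      ∀ i : Fin p, p - k ≤ (i : ℕ) → u i ≠ 0 := by
  constructor
  · intro h
    refine ⟨fun i j hij he => h (Set.mem_iUnion₂.mpr ⟨_, Or.inl ⟨i, j, hij, rfl⟩, he⟩),
      fun i j hij he => h (Set.mem_iUnion₂.mpr ⟨_, Or.inr (Or.inl ⟨i, j, hij, rfl⟩), he⟩),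
      fun i hi he => h (Set.mem_iUnion₂.mpr ⟨_, Or.inr (Or.inr ⟨i, hi, rfl⟩), he⟩)⟩
  · rintro ⟨h1, h2, h3⟩ hu
    rw [Set.mem_iUnion₂] at hu
    obtain ⟨H, hH, huH⟩ := hu
    rcases hH with ⟨i, j, hij, rfl⟩ | ⟨i, j, hij, rfl⟩ | ⟨i, hi, rfl⟩
    · exact h1 i j hij huH
    · exact h2 i j hij huH
    · exact h3 i hi huH

/-- Two points have the same sign pattern with respect to `𝒟_p^k`. -/
def signEq {p : ℕ} (k : ℕ) (u v : Fin p → ℝ) : Prop :=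
  (∀ i j : Fin p, i < j → 0 < (u i - u j) * (v i - v j)) ∧
  (∀ i j : Fin p, i < j → 0 < (u i + u j) * (v i + v j)) ∧
  ∀ i : Fin p, p - k ≤ (i : ℕ) → 0 < u i * v i

lemma signEq_mem_comp {p k : ℕ} {u v : Fin p → ℝ} (h : signEq k u v) : v ∈ comp p k := by
  refine mem_comp_iff.mpr ⟨fun i j hij he => ?_, fun i j hij he => ?_, fun i hi he => ?_⟩
  · have := h.1 i j hij; rw [he, mul_zero] at this; exact lt_irrefl 0 this
  · have := h.2.1 i j hij; rw [he, mul_zero] at this; exact lt_irrefl 0 this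
  · have := h.2.2 i hi; rw [he, mul_zero] at this; exact lt_irrefl 0 this

lemma signEq_self {p k : ℕ} {u : Fin p → ℝ} (hu : u ∈ comp p k) : signEq k u u := by
  obtain ⟨h1, h2, h3⟩ := mem_comp_iff.mp hu
  exact ⟨fun i j hij => mul_self_pos.mpr (h1 i j hij),
    fun i j hij => mul_self_pos.mpr (h2 i j hij),
    fun i hi => mul_self_pos.mpr (h3 i hi)⟩

lemma convex_comb_pos {a b x y : ℝ} (ha : 0 ≤ a) (hb : 0 ≤ b) (hab : a + b = 1)
    (hx : 0 < x) (hy : 0 < y) : 0 < a * x + b * y := by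
  rcases ha.eq_or_lt with h | h
  · have : b = 1 := by linarith
    simp [← h, this, hy]
  · have := mul_pos h hx
    nlinarith [mul_nonneg hb hy.le]

lemma convex_S {p k : ℕ} (u : Fin p → ℝ) : Convex ℝ {v : Fin p → ℝ | signEq k u v} := by
  intro v hv w hw a b ha hb hab
  refine ⟨fun i j hij => ?_, fun i j hij => ?_, fun i hi => ?_⟩
  · have h1 := hv.1 i j hij; have h2 := hw.1 i j hij
    have he : (u i - u j) * ((a • v + b • w) i - (a • v + b • w) j)
        = a * ((u i - u j) * (v i - v j)) + b * ((u i - u j) * (w i - w j)) := by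
      simp only [Pi.add_apply, Pi.smul_apply, smul_eq_mul]; ring
    rw [he]; exact convex_comb_pos ha hb hab h1 h2
  · have h1 := hv.2.1 i j hij; have h2 := hw.2.1 i j hij
    have he : (u i + u j) * ((a • v + b • w) i + (a • v + b • w) j)
        = a * ((u i + u j) * (v i + v j)) + b * ((u i + u j) * (w i + w j)) := by
      simp only [Pi.add_apply, Pi.smul_apply, smul_eq_mul]; ring
    rw [he]; exact convex_comb_pos ha hb hab h1 h2
  · have h1 := hv.2.2 i hi; have h2 := hw.2.2 i hi
    have he : u i * ((a • v + b • w) i) = a * (u i * v i) + b * (u i * w i) := by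
      simp only [Pi.add_apply, Pi.smul_apply, smul_eq_mul]; ring
    rw [he]; exact convex_comb_pos ha hb hab h1 h2

lemma sign_const_on {p : ℕ} {s : Set (Fin p → ℝ)} (hs : IsPreconnected s)
    {f : (Fin p → ℝ) → ℝ} (hf : Continuous f) (h0 : ∀ w ∈ s, f w ≠ 0)
    {u v : Fin p → ℝ} (hu : u ∈ s) (hv : v ∈ s) : 0 < f u * f v := by
  have himg : IsPreconnected (f '' s) := hs.image f hf.continuousOn
  rcases (h0 u hu).lt_or_gt with h1 | h1 <;> rcases (h0 v hv).lt_or_gt with h2 | h2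
  · exact mul_pos_of_neg_of_neg h1 h2
  · exfalso
    have : (0 : ℝ) ∈ f '' s := himg.Icc_subset ⟨u, hu, rfl⟩ ⟨v, hv, rfl⟩ ⟨h1.le, h2.le⟩
    obtain ⟨w, hw, hw0⟩ := this
    exact h0 w hw hw0
  · exfalso
    have : (0 : ℝ) ∈ f '' s := himg.Icc_subset ⟨v, hv, rfl⟩ ⟨u, hu, rfl⟩ ⟨h2.le, h1.le⟩
    obtain ⟨w, hw, hw0⟩ := this
    exact h0 w hw hw0
  · exact mul_pos h1 h2

lemma mem_component_iff {p k : ℕ} {u v : Fin p → ℝ} (hu : u ∈ comp p k) :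
    v ∈ connectedComponentIn (comp p k) u ↔ signEq k u v := by
  constructor
  · intro hv
    have hsub : connectedComponentIn (comp p k) u ⊆ comp p k :=
      connectedComponentIn_subset _ _
    have hpre : IsPreconnected (connectedComponentIn (comp p k) u) :=
      isPreconnected_connectedComponentIn
    have humem : u ∈ connectedComponentIn (comp p k) u := mem_connectedComponentIn hu
    refine ⟨fun i j hij => ?_, fun i j hij => ?_, fun i hi => ?_⟩
    · exact sign_const_on hpre ((continuous_apply i).sub (continuous_apply j))
        (fun w hw => (mem_comp_iff.mp (hsub hw)).1 i j hij) humem hv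
    · exact sign_const_on hpre ((continuous_apply i).add (continuous_apply j))
        (fun w hw => (mem_comp_iff.mp (hsub hw)).2.1 i j hij) humem hv
    · exact sign_const_on hpre (continuous_apply i)
        (fun w hw => (mem_comp_iff.mp (hsub hw)).2.2 i hi) humem hv
  · intro hv
    exact (convex_S u).isPreconnected.subset_connectedComponentIn (signEq_self hu)
      (fun w hw => signEq_mem_comp hw) hv

lemma key_signs {a b c d : ℝ} (h1 : |a| < |b|) (h2 : |c| < |d|) (h3 : 0 < b * d) :
    0 < (a - b) * (c - d) ∧ 0 < (a + b) * (c + d) := by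
  obtain ⟨ha1, ha2⟩ := abs_lt.mp h1
  obtain ⟨hc1, hc2⟩ := abs_lt.mp h2
  rcases lt_or_ge b 0 with hb | hb
  · have hd : d < 0 := by nlinarith [abs_nonneg a, abs_nonneg c]
    rw [abs_of_neg hb] at ha1 ha2
    rw [abs_of_neg hd] at hc1 hc2
    constructor <;> nlinarith
  · have hb' : 0 < b := lt_of_le_of_ne hb (by rintro rfl; simp at h3)
    have hd : 0 < d := by nlinarith
    rw [abs_of_pos hb'] at ha1 ha2
    rw [abs_of_pos hd] at hc1 hc2
    constructor <;> nlinarith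

lemma pos_trans {a b c : ℝ} (h1 : 0 < a * b) (h2 : 0 < a * c) : 0 < b * c := by
  nlinarith [mul_pos h1 h2, sq_nonneg a]

lemma abs_lt_iff_sq {a b : ℤ} : |a| < |b| ↔ a ^ 2 < b ^ 2 := by
  constructor
  · intro h; nlinarith [abs_nonneg a, sq_abs a, sq_abs b]
  · intro h; by_contra hle
    push_neg at hle
    nlinarith [abs_nonneg b, sq_abs a, sq_abs b]

lemma same_order {A B : ℤ} (h : 0 < A * B) : 0 < A ↔ 0 < B := by
  constructor <;> intro h' <;> nlinarith

lemma eq_of_abs_eq_mul_pos {a b : ℤ} (h : |a| = |b|) (hp : 0 < a * b) : a = b := by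
  rcases abs_eq_abs.mp h with h' | h'
  · exact h'
  · subst h'; nlinarith

lemma mem_Mfin_iff {p k : ℕ} {x : Fin p → ℤ} :
    x ∈ Mfin p k ↔ (∀ i, -(p:ℤ) ≤ x i ∧ x i ≤ p) ∧ (∀ i, x i ≠ 0) ∧
      (∀ i j, i ≠ j → |x i| ≠ |x j|) ∧ ∀ i : Fin p, (i:ℕ) < p - k → x i ≠ -1 := by
  simp [Mfin, Fintype.mem_piFinset, Finset.mem_Icc, and_assoc]

lemma image_abs_eq {p : ℕ} {f : Fin p → ℤ} (hinj : Function.Injective f)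
    (hmem : ∀ i, f i ∈ Finset.Icc (1:ℤ) p) :
    Finset.image f Finset.univ = Finset.Icc (1:ℤ) p := by
  apply Finset.eq_of_subset_of_card_le
  · intro a ha
    obtain ⟨j, _, rfl⟩ := Finset.mem_image.mp ha
    exact hmem j
  · rw [Finset.card_image_of_injective _ hinj, Finset.card_univ, Fintype.card_fin,
      Int.card_Icc]
    omega

lemma count_eq {p : ℕ} {f : Fin p → ℤ} (hinj : Function.Injective f)
    (hmem : ∀ i, f i ∈ Finset.Icc (1:ℤ) p) (i : Fin p) :
    f i = (Finset.univ.filter fun j => f j < f i).card + 1 := by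
  have himg := image_abs_eq hinj hmem
  have h2 : (Finset.univ.filter fun j => f j < f i).card
      = ((Finset.Icc (1:ℤ) p).filter (fun a => a < f i)).card := by
    rw [← himg, Finset.filter_image, Finset.card_image_of_injective _ hinj]
  have h3 : (Finset.Icc (1:ℤ) p).filter (fun a => a < f i) = Finset.Icc 1 (f i - 1) := by
    ext a
    have := Finset.mem_Icc.mp (hmem i)
    simp only [Finset.mem_filter, Finset.mem_Icc]
    omega
  rw [h2, h3, Int.card_Icc]
  have := Finset.mem_Icc.mp (hmem i)
  omega

/-- Uniqueness: two points of `Mfin` with the same sign pattern coincide. -/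
lemma Mfin_eq_of_signEq {p k : ℕ} {x y : Fin p → ℤ} (hx : x ∈ Mfin p k)
    (hy : y ∈ Mfin p k) (h : signEq k (toR x) (toR y)) : x = y := by
  obtain ⟨hxb, hx0, hxa, hxm⟩ := mem_Mfin_iff.mp hx
  obtain ⟨hyb, hy0, hya, hym⟩ := mem_Mfin_iff.mp hy
  -- integer versions of the sign conditions, for all i ≠ j
  have hD : ∀ i j : Fin p, i ≠ j → 0 < (x i - x j) * (y i - y j) := by
    intro i j hij
    rcases hij.lt_or_gt with hl | hl
    · have := h.1 i j hl
      simp only [toR] at this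
      exact_mod_cast this
    · have := h.1 j i hl
      simp only [toR] at this
      have : (0:ℤ) < (x j - x i) * (y j - y i) := by exact_mod_cast this
      nlinarith
  have hS : ∀ i j : Fin p, i ≠ j → 0 < (x i + x j) * (y i + y j) := by
    intro i j hij
    rcases hij.lt_or_gt with hl | hl
    · have := h.2.1 i j hl
      simp only [toR] at this
      exact_mod_cast this
    · have := h.2.1 j i hl
      simp only [toR] at this
      have : (0:ℤ) < (x j + x i) * (y j + y i) := by exact_mod_cast this
      nlinarith
  -- same ordering of absolute values
  have hiff : ∀ i j : Fin p, i ≠ j → (|x j| < |x i| ↔ |y j| < |y i|) := by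
    intro i j hij
    have hprod : 0 < (x i ^ 2 - x j ^ 2) * (y i ^ 2 - y j ^ 2) := by
      have := mul_pos (hD i j hij) (hS i j hij)
      nlinarith
    rw [abs_lt_iff_sq, abs_lt_iff_sq]
    constructor
    · intro hlt
      have h1 : (0:ℤ) < x i ^ 2 - x j ^ 2 := by omega
      have := (same_order hprod).mp (by omega)
      omega
    · intro hlt
      have := (same_order hprod).mpr (by omega)
      omega
  -- injectivity of abs and membership in Icc 1 p
  have hxinj : Function.Injective fun i => |x i| := by
    intro a b hab
    by_contra hne
    exact hxa a b hne hab
  have hyinj : Function.Injective fun i => |y i| := by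
    intro a b hab
    by_contra hne
    exact hya a b hne hab
  have hxmem : ∀ i, |x i| ∈ Finset.Icc (1:ℤ) p := by
    intro i
    rw [Finset.mem_Icc]
    exact ⟨Int.one_le_abs (hx0 i), abs_le.mpr ⟨(hxb i).1, (hxb i).2⟩⟩
  have hymem : ∀ i, |y i| ∈ Finset.Icc (1:ℤ) p := by
    intro i
    rw [Finset.mem_Icc]
    exact ⟨Int.one_le_abs (hy0 i), abs_le.mpr ⟨(hyb i).1, (hyb i).2⟩⟩
  -- equal absolute values
  have habs_eq : ∀ i, |x i| = |y i| := by
    intro i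
    have hcx := count_eq hxinj hxmem i
    have hcy := count_eq hyinj hymem i
    have hfe : (Finset.univ.filter fun j => |x j| < |x i|)
        = Finset.univ.filter fun j => |y j| < |y i| := by
      ext j
      simp only [Finset.mem_filter, Finset.mem_univ, true_and]
      rcases eq_or_ne i j with rfl | hne
      · simp
      · exact hiff i j hne
    rw [hcx, hcy, hfe]
  -- conclude coordinatewise
  funext i
  by_cases hi : (i : ℕ) < p - k
  · by_cases h1 : |x i| = 1
    · have hx1 : x i = 1 := by
        rcases abs_cases (x i) with ⟨he, _⟩ | ⟨he, _⟩
        · omega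
        · have := hxm i hi; omega
      have hy1 : y i = 1 := by
        have h1' : |y i| = 1 := by rw [← habs_eq]; exact h1
        rcases abs_cases (y i) with ⟨he, _⟩ | ⟨he, _⟩
        · omega
        · have := hym i hi; omega
      rw [hx1, hy1]
    · -- |x i| ≥ 2; find j with |x j| = 1
      have h2 : 2 ≤ |x i| := by
        have := Int.one_le_abs (hx0 i)
        omega
      have hone : (1:ℤ) ∈ Finset.image (fun m => |x m|) Finset.univ := by
        rw [image_abs_eq hxinj hxmem, Finset.mem_Icc]
        have := i.isLt
        constructor
        · rfl
        · exact_mod_cast Nat.one_le_iff_ne_zero.mpr (by omega)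
      obtain ⟨j, _, hj1⟩ := Finset.mem_image.mp hone
      have hne : j ≠ i := by
        intro hji
        rw [hji] at hj1
        omega
      have hj1' : |y j| = 1 := by rw [← habs_eq]; exact hj1
      have hyi : |y i| = |x i| := (habs_eq i).symm
      have hd := hD i j hne.symm
      -- show x i = y i
      by_contra hxy
      have hyx : y i = -x i := by
        rcases abs_eq_abs.mp (habs_eq i) with h' | h'
        · exact absurd h' hxy
        · omega
      have hbx := abs_lt.mp (show |x j| < |x i| by omega)
      have hby := abs_lt.mp (show |y j| < |x i| by omega)
      rcases abs_cases (x i) with ⟨he, hp0⟩ | ⟨he, hp0⟩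
      · rw [he] at hbx hby
        nlinarith
      · rw [he] at hbx hby
        nlinarith
  · have hp : 0 < x i * y i := by
      have := h.2.2 i (by omega)
      simp only [toR] at this
      exact_mod_cast this
    exact eq_of_abs_eq_mul_pos (habs_eq i) hp

/-- Existence: every point of the complement has a representative in `Mfin` with
the same sign pattern. -/
lemma exists_rep {p k : ℕ} {u : Fin p → ℝ} (hu : u ∈ comp p k) :
    ∃ x ∈ Mfin p k, signEq k u (toR x) := by
  obtain ⟨h1, h2, h3⟩ := mem_comp_iff.mp hu
  have habs : ∀ i j : Fin p, i ≠ j → |u i| ≠ |u j| := by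
    intro i j hij he
    rcases abs_eq_abs.mp he with h' | h'
    · rcases hij.lt_or_gt with hl | hl
      · exact h1 i j hl (by rw [h']; ring)
      · exact h1 j i hl (by rw [h']; ring)
    · rcases hij.lt_or_gt with hl | hl
      · exact h2 i j hl (by rw [h']; ring)
      · exact h2 j i hl (by rw [h']; ring)
  classical
  set r : Fin p → ℕ := fun i => (Finset.univ.filter fun j => |u j| < |u i|).card with hrdef
  have hrmono : ∀ i j : Fin p, |u i| < |u j| → r i < r j := by
    intro i j hij
    apply Finset.card_lt_card
    constructor
    · intro m hm
      simp only [Finset.mem_filter, Finset.mem_univ, true_and] at hm ⊢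
      exact hm.trans hij
    · intro hsub
      have hmem : i ∈ Finset.univ.filter fun m => |u m| < |u j| := by
        simp only [Finset.mem_filter, Finset.mem_univ, true_and]; exact hij
      have := hsub hmem
      simp only [Finset.mem_filter, Finset.mem_univ, true_and] at this
      exact lt_irrefl _ this
  have hrmono' : ∀ i j : Fin p, r i < r j → |u i| < |u j| := by
    intro i j hij
    rcases lt_trichotomy |u i| |u j| with h | h | h
    · exact h
    · rcases eq_or_ne i j with rfl | hne
      · omega
      · exact absurd h (habs i j hne)
    · exact absurd (hrmono j i h) (by omega)
  have hrne : ∀ i j : Fin p, i ≠ j → r i ≠ r j := by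
    intro i j hne he
    rcases lt_trichotomy |u i| |u j| with h | h | h
    · exact absurd (hrmono i j h) (by omega)
    · exact habs i j hne h
    · exact absurd (hrmono j i h) (by omega)
  have hrlt : ∀ i, r i < p := by
    intro i
    have hss : (Finset.univ.filter fun j => |u j| < |u i|) ⊂ Finset.univ := by
      rw [Finset.ssubset_univ_iff]
      intro he
      have hmem : i ∈ Finset.univ.filter fun j => |u j| < |u i| := by
        rw [he]; exact Finset.mem_univ i
      simp only [Finset.mem_filter, Finset.mem_univ, true_and] at hmem
      exact lt_irrefl _ hmem
    have := Finset.card_lt_card hss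
    simpa [Finset.card_univ] using this
  set x : Fin p → ℤ := fun i =>
    if u i < 0 ∧ ¬((i : ℕ) < p - k ∧ r i = 0) then -((r i : ℤ) + 1) else (r i : ℤ) + 1
    with hxdef
  have habsx : ∀ i, |x i| = (r i : ℤ) + 1 := by
    intro i
    simp only [hxdef]
    split_ifs
    · rw [abs_of_neg (by omega)]; ring
    · rw [abs_of_nonneg (by omega)]
  -- sign of x m agrees with u m when r m ≠ 0, and also when p - k ≤ m
  have hsign : ∀ m : Fin p, u m ≠ 0 → (r m ≠ 0 ∨ ¬((m : ℕ) < p - k)) →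
      0 < u m * (x m : ℝ) := by
    intro m hm0 hmc
    simp only [hxdef]
    split_ifs with hc
    · push_cast
      have ht : (0:ℝ) ≤ (r m : ℝ) := Nat.cast_nonneg _
      nlinarith [hc.1]
    · have hum : 0 < u m := by
        rcases hm0.lt_or_gt with hn | hp
        · exfalso
          apply hc
          refine ⟨hn, ?_⟩
          rintro ⟨hlt, hr0⟩
          rcases hmc with h' | h'
          · exact h' hr0
          · exact h' hlt
        · exact hp
      push_cast
      have ht : (0:ℝ) ≤ (r m : ℝ) := Nat.cast_nonneg _
      nlinarith
  have habsxR : ∀ i, |(x i : ℝ)| = (r i : ℝ) + 1 := by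
    intro i
    rw [← Int.cast_abs, habsx i]
    push_cast
    ring
  -- the pair conditions
  have hpair : ∀ i j : Fin p, i < j →
      0 < (u i - u j) * ((x i : ℝ) - (x j : ℝ)) ∧
      0 < (u i + u j) * ((x i : ℝ) + (x j : ℝ)) := by
    intro i j hij
    have hne : i ≠ j := hij.ne
    rcases (hrne i j hne).lt_or_gt with hr | hr
    · have hu' : |u i| < |u j| := hrmono' i j hr
      have hx' : |(x i : ℝ)| < |(x j : ℝ)| := by
        rw [habsxR, habsxR]
        have : (r i : ℝ) < (r j : ℝ) := by exact_mod_cast hr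
        linarith
      have huj : u j ≠ 0 := by
        intro he
        rw [he, abs_zero] at hu'
        exact absurd hu' (not_lt.mpr (abs_nonneg _))
      have hsj : 0 < u j * (x j : ℝ) := hsign j huj (Or.inl (by omega))
      exact key_signs hu' hx' hsj
    · have hu' : |u j| < |u i| := hrmono' j i hr
      have hx' : |(x j : ℝ)| < |(x i : ℝ)| := by
        rw [habsxR, habsxR]
        have : (r j : ℝ) < (r i : ℝ) := by exact_mod_cast hr
        linarith
      have hui : u i ≠ 0 := by
        intro he
        rw [he, abs_zero] at hu'
        exact absurd hu' (not_lt.mpr (abs_nonneg _))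
      have hsi : 0 < u i * (x i : ℝ) := hsign i hui (Or.inl (by omega))
      obtain ⟨hA, hB⟩ := key_signs hu' hx' hsi
      constructor
      · nlinarith
      · nlinarith
  refine ⟨x, ?_, ?_, ?_, ?_⟩
  · -- membership in Mfin
    rw [mem_Mfin_iff]
    refine ⟨fun i => ?_, fun i => ?_, fun i j hij => ?_, fun i hi => ?_⟩
    · have ha := habsx i
      have hl := hrlt i
      rcases abs_cases (x i) with ⟨he, _⟩ | ⟨he, _⟩ <;> constructor <;> omega
    · intro h0
      have := habsx i
      rw [h0, abs_zero] at this
      omega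
    · intro he
      rw [habsx i, habsx j] at he
      exact hrne i j hij (by omega)
    · -- x i ≠ -1 for i < p - k
      intro he
      simp only [hxdef] at he
      split_ifs at he with hc
      · exact hc.2 ⟨hi, by omega⟩
      · omega
  · exact fun i j hij => (hpair i j hij).1
  · exact fun i j hij => (hpair i j hij).2
  · intro i hi
    have hui : u i ≠ 0 := h3 i hi
    exact hsign i hui (Or.inr (by omega))

/-- every point of `M_p^k` lies in the complement of the union of the
hyperplanes of `𝒟_p^k`, and every connected component of this complement contains
exactly one point of `M_p^k`. -/
theorem regions_bijective_Mpk (p k : ℕ) (hp : 1 ≤ p) (hk : k ≤ p) :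
    (∀ x ∈ Mfin p k, toR x ∈ comp p k) ∧
    ∀ u ∈ comp p k, ∃! x, x ∈ Mfin p k ∧ toR x ∈ connectedComponentIn (comp p k) u := by
  constructor
  · intro x hx
    obtain ⟨hb, h0, ha, hm⟩ := mem_Mfin_iff.mp hx
    refine mem_comp_iff.mpr ⟨fun i j hij he => ?_, fun i j hij he => ?_, fun i hi he => ?_⟩
    · apply ha i j hij.ne
      have hxe : (x i : ℝ) = (x j : ℝ) := by
        have : toR x i - toR x j = 0 := he
        simp only [toR] at this
        linarith
      rw [show x i = x j from by exact_mod_cast hxe]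
    · apply ha i j hij.ne
      have hxe : (x i : ℝ) = -(x j : ℝ) := by
        have : toR x i + toR x j = 0 := he
        simp only [toR] at this
        linarith
      have : x i = -x j := by exact_mod_cast hxe
      rw [this, abs_neg]
    · apply h0 i
      have : toR x i = 0 := he
      simp only [toR] at this
      exact_mod_cast this
  · intro u hu
    obtain ⟨x, hxM, hxs⟩ := exists_rep hu
    refine ⟨x, ⟨hxM, (mem_component_iff hu).mpr hxs⟩, ?_⟩
    rintro y ⟨hyM, hyc⟩
    have hys := (mem_component_iff hu).mp hyc
    apply Mfin_eq_of_signEq hyM hxM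
    exact ⟨fun i j hij => pos_trans (hys.1 i j hij) (hxs.1 i j hij),
      fun i j hij => pos_trans (hys.2.1 i j hij) (hxs.2.1 i j hij),
      fun i hi => pos_trans (hys.2.2 i hi) (hxs.2.2 i hi)⟩
end
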